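/- If F : V → U satisfies A F = 0 for A = Σ_j a_j dπ^B(X_j) (derived action on fiducial operators), then for every f ∈ V the covariant transform W f(g) = F(π(g⁻¹)f) satisfies D(Wf) = 0 where D = Σ_j ā_j X_j^L is the corresponding left-invariant differential operator; verify this concretely for the affine group: if F : C^∞ → ℂ is linear continuous and F(f + x f' + i f') = 0 for all test functions f, then the function Φ(a,b) = F(ρ(a,b)⁻¹ f) with [ρ(g)f](x) = a f(ax+b) (g⁻¹ = (a,b), p = 1) satisfies a(∂_b + i∂_a)Φ = 0. -/

import Mathlib

/-!
The operator `g ↦ g + x g' + i g'` is `g ↦ ((x + i) g)'`, and `(x + i)⁻¹` has temperate growth,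
so every derivative `W'` of a Schwartz function `W` lies in its range (take `g = W / (x + i)`).
A Schwartz function with vanishing integral is such a derivative: its primitive from `-∞` decays
at `-∞` trivially and at `+∞` because it equals minus the tail integral. Hence `F` kills every
Schwartz function of integral zero. Since `∫ a f (a x + b) dx = ∫ f` for `a > 0`, the covariant
transform `Φ` is constant on the half-plane `a > 0`, so both partial derivatives vanish.
-/

open MeasureTheory Set Complex
open scoped SchwartzMap

theorem hasDerivAt_integral_Iic {V : Type*} [NormedAddCommGroup V] [NormedSpace ℝ V]
    [CompleteSpace V] {h : ℝ → V} (hi : Integrable h) (hc : Continuous h) (x : ℝ) :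
    HasDerivAt (fun y => ∫ t in Iic y, h t) (h x) x := by
  have hP : (fun y => ∫ t in Iic y, h t) = fun y => (∫ t in Iic 0, h t) + ∫ t in 0..y, h t := by
    funext y
    rw [← intervalIntegral.integral_Iic_sub_Iic hi.integrableOn hi.integrableOn, add_sub_cancel]
  rw [hP]
  exact (intervalIntegral.integral_hasDerivAt_right hi.intervalIntegrable
    (hc.stronglyMeasurableAtFilter _ _) hc.continuousAt).const_add _

namespace SchwartzMap

variable {V : Type*} [NormedAddCommGroup V] [NormedSpace ℝ V]

theorem pow_mul_norm_setIntegral_le (h : 𝓢(ℝ, V)) (k : ℕ) {x : ℝ} {s : Set ℝ}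
    (hs : MeasurableSet s) (hx : ∀ t ∈ s, ‖x‖ ≤ ‖t‖) :
    ‖x‖ ^ k * ‖∫ t in s, h t‖ ≤ ∫ t, ‖t‖ ^ k * ‖h t‖ :=
  calc ‖x‖ ^ k * ‖∫ t in s, h t‖ ≤ ‖x‖ ^ k * ∫ t in s, ‖h t‖ := by
        gcongr; exact norm_integral_le_integral_norm _
    _ = ∫ t in s, ‖x‖ ^ k * ‖h t‖ := (integral_const_mul _ _).symm
    _ ≤ ∫ t in s, ‖t‖ ^ k * ‖h t‖ :=
        setIntegral_mono_on (h.integrable.norm.const_mul _).integrableOn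
          (h.integrable_pow_mul volume k).integrableOn hs
          fun t ht => by gcongr; exact hx t ht
    _ ≤ ∫ t, ‖t‖ ^ k * ‖h t‖ :=
        setIntegral_le_integral (h.integrable_pow_mul volume k)
          (Filter.Eventually.of_forall fun _ => by positivity)

theorem pow_mul_norm_integral_Iic_le (h : 𝓢(ℝ, V)) (h0 : ∫ t, h t = 0) (k : ℕ) (x : ℝ) :
    ‖x‖ ^ k * ‖∫ t in Iic x, h t‖ ≤ ∫ t, ‖t‖ ^ k * ‖h t‖ := by
  rcases le_total x 0 with hx | hx
  · refine h.pow_mul_norm_setIntegral_le k measurableSet_Iic fun t ht => ?_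
    simp only [Real.norm_eq_abs]
    rw [abs_of_nonpos hx, abs_of_nonpos (le_trans ht hx)]
    linarith [mem_Iic.mp ht]
  · have htail := intervalIntegral.integral_Iic_add_Ioi (μ := volume) (b := x)
      h.integrable.integrableOn h.integrable.integrableOn
    rw [h0, add_eq_zero_iff_eq_neg] at htail
    rw [htail, norm_neg]
    refine h.pow_mul_norm_setIntegral_le k measurableSet_Ioi fun t ht => ?_
    simp only [Real.norm_eq_abs]
    rw [abs_of_nonneg hx, abs_of_nonneg (hx.trans (le_of_lt ht))]
    exact le_of_lt ht

variable [CompleteSpace V]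

noncomputable def primitive (h : 𝓢(ℝ, V)) (h0 : ∫ t, h t = 0) : 𝓢(ℝ, V) where
  toFun x := ∫ t in Iic x, h t
  smooth' := by
    rw [contDiff_infty_iff_deriv]
    refine ⟨fun x => (hasDerivAt_integral_Iic h.integrable h.continuous x).differentiableAt, ?_⟩
    rw [funext fun x => (hasDerivAt_integral_Iic h.integrable h.continuous x).deriv]
    exact h.smooth'
  decay' := by
    intro k n
    cases n with
    | zero =>
      exact ⟨_, fun x => by
        simpa only [norm_iteratedFDeriv_zero] using h.pow_mul_norm_integral_Iic_le h0 k x⟩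
    | succ m =>
      obtain ⟨C, hC⟩ := h.decay' k m
      refine ⟨C, fun x => ?_⟩
      rw [norm_iteratedFDeriv_eq_norm_iteratedDeriv, iteratedDeriv_succ',
        funext fun x => (hasDerivAt_integral_Iic h.integrable h.continuous x).deriv,
        ← norm_iteratedFDeriv_eq_norm_iteratedDeriv]
      exact hC x

theorem hasDerivAt_primitive (h : 𝓢(ℝ, V)) (h0 : ∫ t, h t = 0) (x : ℝ) :
    HasDerivAt (h.primitive h0) (h x) x :=
  hasDerivAt_integral_Iic h.integrable h.continuous x

end SchwartzMap

theorem ofReal_add_I_ne_zero (x : ℝ) : (x : ℂ) + I ≠ 0 := by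
  intro hx
  simpa using congrArg Complex.im hx

theorem hasTemperateGrowth_ofReal_add_I_inv :
    (fun x : ℝ => ((x : ℂ) + I)⁻¹).HasTemperateGrowth := by
  have hinv : (fun x : ℝ => ((x : ℂ) + I)⁻¹) =
      fun x : ℝ => ((x : ℂ) - I) * (((1 + ‖x‖ ^ 2) ^ (-1 : ℝ) : ℝ) : ℂ) := by
    funext x
    have hpos : ((1 + x ^ 2 : ℝ) : ℂ) ≠ 0 := ofReal_ne_zero.mpr (by positivity)
    rw [Real.rpow_neg_one, Real.norm_eq_abs, sq_abs, ofReal_inv, eq_mul_inv_iff_mul_eq₀ hpos,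
      inv_mul_eq_iff_eq_mul₀ (ofReal_add_I_ne_zero x)]
    push_cast
    linear_combination I_sq
  rw [hinv]
  fun_prop

theorem exists_add_mul_deriv_eq_of_hasDerivAt {W h : 𝓢(ℝ, ℂ)}
    (hW : ∀ x, HasDerivAt W (h x) x) :
    ∃ g : 𝓢(ℝ, ℂ), ∀ x : ℝ, h x = g x + (x : ℂ) * deriv (fun y : ℝ => g y) x
        + I * deriv (fun y : ℝ => g y) x := by
  set g := SchwartzMap.smulLeftCLM ℂ (fun x : ℝ => ((x : ℂ) + I)⁻¹) W
  have hg : ∀ x, g x = ((x : ℂ) + I)⁻¹ * W x := fun x => by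
    simp [g, SchwartzMap.smulLeftCLM_apply_apply hasTemperateGrowth_ofReal_add_I_inv]
  refine ⟨g, fun x => ?_⟩
  have hinv : HasDerivAt (fun y : ℝ => ((y : ℂ) + I)⁻¹) (-(((x : ℂ) + I) ^ 2)⁻¹) x := by
    simpa [Function.comp_def] using (hasDerivAt_inv (ofReal_add_I_ne_zero x)).comp x
      ((hasDerivAt_id x).ofReal_comp.add_const I)
  have hderiv : HasDerivAt (fun y => g y)
      (-(((x : ℂ) + I) ^ 2)⁻¹ * W x + ((x : ℂ) + I)⁻¹ * h x) x := by
    simpa only [hg] using hinv.fun_mul (hW x)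
  rw [hderiv.deriv, hg]
  field_simp [ofReal_add_I_ne_zero x]
  ring

theorem integral_smul_comp_mul_add {E : Type*} [NormedAddCommGroup E] [NormedSpace ℝ E]
    (f : ℝ → E) {a : ℝ} (ha : 0 < a) (b : ℝ) :
    ∫ x, a • f (a * x + b) = ∫ x, f x := by
  rw [integral_smul, Measure.integral_comp_mul_left (fun y => f (y + b)),
    integral_add_right_eq_self, abs_of_pos (inv_pos.mpr ha), smul_inv_smul₀ ha.ne']

/-- If a continuous linear functional `F` on Schwartz space annihilates
`g + x g' + i g'` for every Schwartz function `g` (i.e. `A F = 0` for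
`A = dρ_A + i dρ_N`), then the covariant transform
`Φ (a,b) = F (ρ ((a,b)⁻¹) f)`, where `[ρ ((a,b)⁻¹) f](x) = a f (a x + b)`,
satisfies the Cauchy–Riemann type equation `∂_b Φ + i ∂_a Φ = 0`. -/
theorem covariant_transform_cauchy_riemann
    (F : SchwartzMap ℝ ℂ →L[ℂ] ℂ)
    (hF : ∀ g h : SchwartzMap ℝ ℂ,
      (∀ x : ℝ, h x = g x + (x : ℂ) * deriv (fun y : ℝ => g y) x
        + Complex.I * deriv (fun y : ℝ => g y) x) → F h = 0)
    (f : SchwartzMap ℝ ℂ)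
    (ρf : ℝ → ℝ → SchwartzMap ℝ ℂ)
    (hρf : ∀ (a b : ℝ), 0 < a → ∀ x : ℝ, (ρf a b) x = (a : ℂ) * f (a * x + b))
    (Φ : ℝ → ℝ → ℂ) (hΦ : ∀ a b : ℝ, Φ a b = F (ρf a b)) :
    ∀ (a b : ℝ), 0 < a →
      deriv (fun t => Φ a t) b + Complex.I * deriv (fun t => Φ t b) a = 0 := by
  have hint : ∀ a b, 0 < a → ∫ x, ρf a b x = ∫ x, f x := fun a b ha => by
    simp_rw [hρf a b ha, ← real_smul]
    exact integral_smul_comp_mul_add f ha b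
  have hconst : ∀ a b a' b', 0 < a → 0 < a' → Φ a' b' = Φ a b := by
    intro a b a' b' ha ha'
    set h := ρf a' b' - ρf a b
    have h0 : ∫ x, h x = 0 := by
      rw [show ⇑h = fun x => ρf a' b' x - ρf a b x from rfl,
        integral_sub (ρf a' b').integrable (ρf a b).integrable, hint a' b' ha', hint a b ha,
        sub_self]
    obtain ⟨g, hg⟩ := exists_add_mul_deriv_eq_of_hasDerivAt (h.hasDerivAt_primitive h0)
    rw [hΦ, hΦ, ← sub_eq_zero, ← map_sub]
    exact hF g h hg
  intro a b ha
  have hΦb : (fun t => Φ a t) = fun _ => Φ a b := funext fun t => hconst a b a t ha ha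
  have hΦa : (fun t => Φ t b) =ᶠ[nhds a] fun _ => Φ a b := by
    filter_upwards [Ioi_mem_nhds ha] with t ht using hconst a b t b ha ht
  rw [hΦb, hΦa.deriv_eq, deriv_const, deriv_const, mul_zero, add_zero]
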